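/- arXiv:2110.03436 — 4 statements merged into one kernel-verified Lean document; each statement's English description precedes it below -/
import Mathlib

section
/- Let $(S_1,\dots,S_{n-1},P)$ be a commuting tuple of bounded operators on $\mathcal{H}$ such that there exist operators $A_1,\dots,A_{n-1}$ on $\mathcal{D}_P$ with $S_i - S_{n-i}^*P = D_P A_i D_P$ for each $i$, and let $B_1,\dots,B_{n-1}$ on $\mathcal{D}_{P^*}$ satisfy $S_i^* - S_{n-i}P^* = D_{P^*} B_i D_{P^*}$ for each $i$. Then for every $i = 1,\dots,n-1$: $B_i^* D_{P^*} P^* + P P^* B_{n-i} D_{P^*} = D_{P^*} S_i P^*$. -/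
/-!
Multiplied on the left by `D_{P*}`, the identity becomes a ring identity: the adjoint of the
fundamental equation for `i`, the fundamental equation for `n - i`, the commutation of `S_{n-i}`
with `P`, and `D_{P*}² = I - PP*` (so that `D_{P*}` commutes with `PP*`). Both sides of the
identity take values in `𝒟_{P*}`, which is the orthogonal complement of `ker D_{P*}`, so the
factor `D_{P*}` can be cancelled.
-/

open ContinuousLinearMap

theorem IsSelfAdjoint.eq_of_mul_eq_mul_of_mem_closure_range {𝕜 E : Type*} [RCLike 𝕜]
    [NormedAddCommGroup E] [InnerProductSpace 𝕜 E] [CompleteSpace E]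
    {T X Y : E →L[𝕜] E} (hT : IsSelfAdjoint T)
    (hX : ∀ x, X x ∈ (LinearMap.range (T : E →ₗ[𝕜] E)).topologicalClosure)
    (hY : ∀ x, Y x ∈ (LinearMap.range (T : E →ₗ[𝕜] E)).topologicalClosure)
    (h : T * X = T * Y) : X = Y := by
  ext x
  have hperp : X x - Y x ∈ T.kerᗮ := by
    rw [orthogonal_ker, hT.adjoint_eq]
    exact Submodule.sub_mem _ (hX x) (hY x)
  have hker : X x - Y x ∈ T.ker := by
    simpa [map_sub, sub_eq_zero] using congrArg (· x) h
  exact sub_eq_zero.mp ((Submodule.mem_bot 𝕜).mp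
    (T.ker.orthogonal_disjoint.le_bot ⟨hker, hperp⟩))

theorem defect_mul_fundamental_identity {R : Type*} [Ring R] [StarRing R] {d p s t b c : R}
    (hd : IsSelfAdjoint d) (hdd : d * d = 1 - p * star p) (htp : t * p = p * t)
    (hb : star s - t * star p = d * b * d) (hc : star t - s * star p = d * c * d) :
    d * (star b * d * star p + p * star p * c * d) = d * (d * s * star p) := by
  have hb' : s - p * star t = d * star b * d := by
    simpa [star_mul, hd.star_eq, mul_assoc] using congrArg star hb
  have hd_comm : d * (p * star p) = p * star p * d := by
    rw [show p * star p = 1 - d * d by rw [hdd, sub_sub_cancel]]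
    noncomm_ring
  have htp' : star t * star p = star p * star t := by
    simpa [star_mul] using congrArg star htp.symm
  calc d * (star b * d * star p + p * star p * c * d)
      = d * star b * d * star p + d * (p * star p) * c * d := by noncomm_ring
    _ = (d * star b * d) * star p + p * star p * (d * c * d) := by rw [hd_comm]; noncomm_ring
    _ = s * star p - p * (star t * star p) + p * (star p * star t) - p * star p * (s * star p) := by
        rw [← hb', ← hc]; noncomm_ring
    _ = (1 - p * star p) * (s * star p) := by rw [htp']; noncomm_ring
    _ = d * (d * s * star p) := by rw [← hdd]; noncomm_ring

theorem stmt6_general {H : Type*} [NormedAddCommGroup H] [InnerProductSpace ℂ H] [CompleteSpace H]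
    (n : ℕ)
    (S : ℕ → (H →L[ℂ] H)) (P : H →L[ℂ] H)
    (hcommP : ∀ i, 1 ≤ i → i ≤ n - 1 → S i * P = P * S i)
    (DPs : H →L[ℂ] H) (hDPspos : DPs.IsPositive) (hDPssq : DPs * DPs = 1 - P * adjoint P)
    (B : ℕ → (H →L[ℂ] H))
    -- each `Bᵢ` is an operator on the defect space `𝒟_{P*}`:
    (hBrange : ∀ i, 1 ≤ i → i ≤ n - 1 → ∀ x : H,
      B i x ∈ (LinearMap.range (DPs : H →ₗ[ℂ] H)).topologicalClosure ∧
      adjoint (B i) x ∈ (LinearMap.range (DPs : H →ₗ[ℂ] H)).topologicalClosure)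
    (hB : ∀ i, 1 ≤ i → i ≤ n - 1 →
      adjoint (S i) - S (n - i) * adjoint P = DPs * B i * DPs) :
    ∀ i, 1 ≤ i → i ≤ n - 1 →
      adjoint (B i) * DPs * adjoint P + P * adjoint P * B (n - i) * DPs =
        DPs * S i * adjoint P := by
  intro i hi hin
  have hDPs := hDPspos.isSelfAdjoint
  set M := (LinearMap.range (DPs : H →ₗ[ℂ] H)).topologicalClosure
  have hDPs_mem : ∀ y, DPs y ∈ M := fun y ↦ Submodule.le_topologicalClosure _ ⟨y, rfl⟩
  have hPPs_mem : ∀ y ∈ M, (P * adjoint P) y ∈ M := fun y hy ↦ by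
    rw [show P * adjoint P = 1 - DPs * DPs by rw [hDPssq, sub_sub_cancel]]
    exact M.sub_mem hy (hDPs_mem _)
  refine hDPs.eq_of_mul_eq_mul_of_mem_closure_range (fun x ↦ ?_) (fun x ↦ hDPs_mem _) ?_
  · exact M.add_mem (hBrange i hi hin _).2
      (hPPs_mem _ (hBrange (n - i) (by omega) (by omega) _).1)
  · have hBni := hB (n - i) (by omega) (by omega)
    rw [Nat.sub_sub_self (by omega)] at hBni
    simp only [← star_eq_adjoint] at hB hBni ⊢
    exact defect_mul_fundamental_identity hDPs hDPssq (hcommP (n - i) (by omega) (by omega))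
      (hB i hi hin) hBni

/-- Let `(S₁, …, S_{n-1}, P)` be a commuting tuple of bounded operators on a
Hilbert space `H`, `P` a contraction with defect operator `D_{P*}`, and let `Aᵢ`
(resp. `Bᵢ`), viewed as operators on `𝒟_P` (resp. `𝒟_{P*}`), satisfy the fundamental
equations `Sᵢ - S_{n-i}* P = D_P Aᵢ D_P` and `Sᵢ* - S_{n-i} P* = D_{P*} Bᵢ D_{P*}`.  Then for
each `1 ≤ i ≤ n-1`:  `Bᵢ* D_{P*} P* + P P* B_{n-i} D_{P*} = D_{P*} Sᵢ P*`. -/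
theorem stmt6 {H : Type*} [NormedAddCommGroup H] [InnerProductSpace ℂ H] [CompleteSpace H]
    (n : ℕ) (hn : 2 ≤ n)
    (S : ℕ → (H →L[ℂ] H)) (P : H →L[ℂ] H) (hP : ‖P‖ ≤ 1)
    (hcomm : ∀ i j, 1 ≤ i → i ≤ n - 1 → 1 ≤ j → j ≤ n - 1 → S i * S j = S j * S i)
    (hcommP : ∀ i, 1 ≤ i → i ≤ n - 1 → S i * P = P * S i)
    (DP : H →L[ℂ] H) (hDPpos : DP.IsPositive) (hDPsq : DP * DP = 1 - adjoint P * P)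
    (DPs : H →L[ℂ] H) (hDPspos : DPs.IsPositive) (hDPssq : DPs * DPs = 1 - P * adjoint P)
    (A : ℕ → (H →L[ℂ] H))
    (hA : ∀ i, 1 ≤ i → i ≤ n - 1 →
      S i - adjoint (S (n - i)) * P = DP * A i * DP)
    (B : ℕ → (H →L[ℂ] H))
    -- each `Bᵢ` is an operator on the defect space `𝒟_{P*}`:
    (hBrange : ∀ i, 1 ≤ i → i ≤ n - 1 → ∀ x : H,
      B i x ∈ (LinearMap.range (DPs : H →ₗ[ℂ] H)).topologicalClosure ∧
      adjoint (B i) x ∈ (LinearMap.range (DPs : H →ₗ[ℂ] H)).topologicalClosure)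
    (hB : ∀ i, 1 ≤ i → i ≤ n - 1 →
      adjoint (S i) - S (n - i) * adjoint P = DPs * B i * DPs) :
    ∀ i, 1 ≤ i → i ≤ n - 1 →
      adjoint (B i) * DPs * adjoint P + P * adjoint P * B (n - i) * DPs =
        DPs * S i * adjoint P :=
  stmt6_general n S P hcommP DPs hDPspos hDPssq B hBrange hB
end

section
/- Let $T$ on $\ell^2$ be given by $T(x_1,x_2,\dots) = (0,\alpha x_1, x_2, x_3,\dots)$ with $\alpha\in(0,1)$, and let $P = T^2$. Then the strong limit $\mathcal{A}$ of $P^{*n}P^n$ satisfies $\mathcal{A}^{1/2}(x_1,x_2,x_3,\dots) = (\alpha x_1, x_2, x_3, \dots)$, and the strong limit $\mathcal{A}_*$ of $P^nP^{*n}$ is $0$. -/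
open ContinuousLinearMap Filter
local notation "ℓ²" => lp (fun _ : ℕ => ℂ) 2

noncomputable section Stmt10Aux

def ee (i : ℕ) : ℓ² := lp.single 2 i (1 : ℂ)

lemma ee_coord (x : ℓ²) (i : ℕ) : inner ℂ (ee i) x = x i := by
  rw [ee, lp.inner_single_left]; simp

def rk1 : ℓ² →L[ℂ] ℓ² := (innerSL ℂ (ee 0)).smulRight (ee 0)

lemma rk1_apply (x : ℓ²) : rk1 x = x 0 • ee 0 := by
  simp [rk1, ee_coord]

def Dg (c : ℂ) : ℓ² →L[ℂ] ℓ² := 1 + c • rk1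

lemma Dg_apply_zero (c : ℂ) (x : ℓ²) : (Dg c x) 0 = (1 + c) * x 0 := by
  simp only [Dg, ContinuousLinearMap.add_apply, one_apply, ContinuousLinearMap.smul_apply, rk1_apply]
  rw [lp.coeFn_add, Pi.add_apply, lp.coeFn_smul, Pi.smul_apply, lp.coeFn_smul, Pi.smul_apply]
  simp [ee, lp.single_apply]; ring

lemma Dg_apply_succ (c : ℂ) (x : ℓ²) (k : ℕ) : (Dg c x) (k + 1) = x (k + 1) := by
  simp only [Dg, ContinuousLinearMap.add_apply, one_apply, ContinuousLinearMap.smul_apply, rk1_apply]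
  rw [lp.coeFn_add, Pi.add_apply, lp.coeFn_smul, Pi.smul_apply, lp.coeFn_smul, Pi.smul_apply]
  simp [ee, lp.single_apply]

lemma inner_Dg (c : ℂ) (x : ℓ²) : inner ℂ x (Dg c x) = (inner ℂ x x : ℂ) + c * Complex.normSq (x 0) := by
  simp only [Dg, add_apply, one_apply, smul_apply, inner_add_right, inner_smul_right, rk1_apply]
  congr 1
  rw [ee, lp.inner_single_right]
  simp only [RCLike.inner_apply, map_one, mul_one, one_mul, Complex.mul_conj]


end Stmt10Aux

noncomputable section Aux2
lemma lp2_ext {f g : ℓ²} (h : ∀ k, f k = g k) : f = g := lp.ext (funext h)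

lemma Dg_mul_Dg (c c' : ℂ) : Dg c * Dg c' = Dg (c + c' + c * c') := by
  ext x k
  rw [ContinuousLinearMap.mul_apply]
  match k with
  | 0 => rw [Dg_apply_zero, Dg_apply_zero, Dg_apply_zero]; ring
  | (k+1) => rw [Dg_apply_succ, Dg_apply_succ, Dg_apply_succ]

lemma rk1_selfAdjoint : IsSelfAdjoint rk1 := by
  rw [IsSelfAdjoint, star_eq_adjoint]
  refine ((ContinuousLinearMap.eq_adjoint_iff rk1 rk1).mpr fun x y => ?_).symm
  rw [rk1_apply, rk1_apply, inner_smul_left, inner_smul_right, ee_coord, ee, lp.inner_single_right]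
  simp only [RCLike.inner_apply, map_one, mul_one]
  ring

lemma norm_sq_coord (z : ℂ) : (Complex.normSq z : ℝ) = ‖z‖ ^ 2 := by
  rw [Complex.normSq_eq_norm_sq]

lemma Dg_isPositive (r : ℝ) (hr : -1 ≤ r) : (Dg (r : ℂ)).IsPositive := by
  rw [isPositive_def']
  constructor
  · exact (IsSelfAdjoint.one _).add
      (IsSelfAdjoint.smul (by exact Complex.conj_ofReal r) rk1_selfAdjoint)
  · intro x
    rw [reApplyInnerSelf, ← inner_re_symm, inner_Dg]
    have h1 : RCLike.re (inner ℂ x x : ℂ) = ‖x‖ ^ 2 := @inner_self_eq_norm_sq ℂ _ _ _ _ x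
    have h2 : ‖x 0‖ ≤ ‖x‖ := lp.norm_apply_le_norm (by norm_num) x 0
    have h4 : ((r : ℂ) * ((Complex.normSq (x 0) : ℝ) : ℂ)) =
        (((r * ‖x 0‖ ^ 2 : ℝ)) : ℂ) := by
      rw [norm_sq_coord]; push_cast; ring
    rw [map_add, h1, h4]
    simp only [RCLike.re_to_complex, Complex.ofReal_re]
    nlinarith [norm_nonneg (x 0), norm_nonneg x, sq_nonneg (‖x 0‖)]
end Aux2

noncomputable section Aux3

lemma lp2_norm_sq (f : ℓ²) : ‖f‖ ^ 2 = ∑' i, ‖f i‖ ^ 2 := by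
  have h := lp.norm_rpow_eq_tsum (p := 2) (E := fun _ : ℕ => ℂ) (by norm_num) f
  rw [ENNReal.toReal_ofNat] at h
  rw [← Real.rpow_natCast ‖f‖ 2, Nat.cast_ofNat, h]
  exact tsum_congr fun i => by rw [← Real.rpow_natCast ‖f i‖ 2, Nat.cast_ofNat]

lemma lp2_summable (f : ℓ²) : Summable fun i => ‖f i‖ ^ 2 := by
  have h := (lp.memℓp f).summable (p := 2) (by norm_num)
  rw [ENNReal.toReal_ofNat] at h
  convert h using 2 with i
  rw [← Real.rpow_natCast ‖f i‖ 2, Nat.cast_ofNat]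

lemma re_inner_Dg (r : ℝ) (x : ℓ²) :
    RCLike.re (inner ℂ x (Dg (r : ℝ) x) : ℂ) = ‖x‖ ^ 2 + r * ‖x 0‖ ^ 2 := by
  rw [inner_Dg]
  have h1 : RCLike.re (inner ℂ x x : ℂ) = ‖x‖ ^ 2 := @inner_self_eq_norm_sq ℂ _ _ _ _ x
  have h4 : ((r : ℂ) * ((Complex.normSq (x 0) : ℝ) : ℂ)) = (((r * ‖x 0‖ ^ 2 : ℝ)) : ℂ) := by
    rw [norm_sq_coord]; push_cast; ring
  rw [map_add, h1, h4]
  simp only [RCLike.re_to_complex, Complex.ofReal_re]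

lemma sqrt_uniq_aux {E : Type*} [NormedAddCommGroup E] [InnerProductSpace ℂ E] [CompleteSpace E]
    {a b c : E →L[ℂ] E} (hb : b * b = a) (hc : c * c = a) (h0b : 0 ≤ b) (h0c : 0 ≤ c) : b = c := by
  rw [← CFC.sqrt_unique hb h0b, ← CFC.sqrt_unique hc h0c]

end Aux3

set_option maxHeartbeats 1000000 in
set_option synthInstance.maxHeartbeats 400000 in
/-- Let `T` on `ℓ²` be `T(x₁,x₂,…) = (0, αx₁, x₂, x₃, …)` with `α ∈ (0,1)`
(coordinates indexed from `0`), and `P = T²`.  Then the strong limit `𝒜` of `P*ⁿPⁿ`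
satisfies `𝒜^{1/2}(x₁,x₂,x₃,…) = (αx₁, x₂, x₃, …)`, and the strong limit `𝒜₊` of `PⁿP*ⁿ`
is `0`. -/
theorem stmt10 (α : ℝ) (hα : 0 < α) (hα1 : α < 1)
    (T : ℓ² →L[ℂ] ℓ²)
    (hT : ∀ x : ℓ², (T x) 0 = 0 ∧ (T x) 1 = (α : ℂ) * x 0 ∧ ∀ k : ℕ, (T x) (k + 2) = x (k + 1))
    (A : ℓ² →L[ℂ] ℓ²)
    (hA : ∀ x : ℓ²,
      Tendsto (fun k : ℕ => ((adjoint (T * T)) ^ k * (T * T) ^ k) x) atTop (nhds (A x)))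
    (Asq : ℓ² →L[ℂ] ℓ²) (hAsqpos : Asq.IsPositive) (hAsq : Asq * Asq = A)
    (Astar : ℓ² →L[ℂ] ℓ²)
    (hAstar : ∀ x : ℓ²,
      Tendsto (fun k : ℕ => ((T * T) ^ k * (adjoint (T * T)) ^ k) x) atTop (nhds (Astar x))) :
    (∀ x : ℓ², (Asq x) 0 = (α : ℂ) * x 0 ∧ ∀ k : ℕ, 1 ≤ k → (Asq x) k = x k) ∧
    Astar = 0 := by
  have hα2 : α^2 ≤ 1 := by nlinarith
  have hT0 : ∀ x : ℓ², (T x) 0 = 0 := fun x => (hT x).1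
  have hT1 : ∀ x : ℓ², (T x) 1 = (α : ℂ) * x 0 := fun x => (hT x).2.1
  have hT2 : ∀ (x : ℓ²) (k : ℕ), (T x) (k + 2) = x (k + 1) := fun x => (hT x).2.2
  -- action of T on basis vectors
  have Te0 : T (ee 0) = (α : ℂ) • ee 1 := by
    refine lp2_ext fun k => ?_
    match k with
    | 0 => rw [hT0]; simp [ee, lp.single_apply, lp.coeFn_smul, Pi.single_apply, -Complex.coe_smul]
    | 1 => rw [hT1]; simp [ee, lp.single_apply, lp.coeFn_smul, Pi.single_apply, -Complex.coe_smul]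
    | (k+2) => rw [hT2]; simp [ee, lp.single_apply, lp.coeFn_smul, Pi.single_apply, -Complex.coe_smul]
  have TeS : ∀ i, T (ee (i+1)) = ee (i+2) := by
    intro i
    refine lp2_ext fun k => ?_
    match k with
    | 0 => rw [hT0]; simp [ee, lp.single_apply, lp.coeFn_smul, Pi.single_apply]
    | 1 => rw [hT1]; simp [ee, lp.single_apply, lp.coeFn_smul, Pi.single_apply]
    | (k+2) => rw [hT2]; simp [ee, lp.single_apply, lp.coeFn_smul, Pi.single_apply]
  -- adjoint of T
  have hTs0 : ∀ y : ℓ², (adjoint T y) 0 = (α : ℂ) * y 1 := by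
    intro y
    rw [← ee_coord (adjoint T y) 0, adjoint_inner_right, Te0, inner_smul_left, ee_coord]
    simp [Complex.conj_ofReal]
  have hTsS : ∀ (y : ℓ²) (k : ℕ), (adjoint T y) (k+1) = y (k+2) := by
    intro y k
    rw [← ee_coord (adjoint T y) (k+1), adjoint_inner_right, TeS, ee_coord]
  -- coordinates of P = T*T
  have hP0 : ∀ x : ℓ², ((T*T) x) 0 = 0 := fun x => by
    rw [ContinuousLinearMap.mul_apply, hT0]
  have hP1 : ∀ x : ℓ², ((T*T) x) 1 = 0 := fun x => by
    rw [ContinuousLinearMap.mul_apply, hT1, hT0, mul_zero]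
  have hP2 : ∀ x : ℓ², ((T*T) x) 2 = (α : ℂ) * x 0 := fun x => by
    have : ((T*T) x) 2 = (T (T x)) (0 + 2) := by rw [ContinuousLinearMap.mul_apply]
    rw [this, hT2, hT1]
  have hP3 : ∀ (x : ℓ²) (k : ℕ), ((T*T) x) (k+3) = x (k+1) := fun x k => by
    have : ((T*T) x) (k+3) = (T (T x)) ((k+1) + 2) := by rw [ContinuousLinearMap.mul_apply]
    rw [this, hT2, hT2]
  -- coordinates of Q = adjoint (T*T)
  have hQeq : adjoint (T * T) = adjoint T * adjoint T := by
    rw [← star_eq_adjoint, ← star_eq_adjoint, ← star_mul]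
  have hQ0 : ∀ y : ℓ², (adjoint (T*T) y) 0 = (α : ℂ) * y 2 := fun y => by
    rw [hQeq, ContinuousLinearMap.mul_apply, hTs0]
    have : (adjoint T y) 1 = (adjoint T y) (0 + 1) := rfl
    rw [this, hTsS]
  have hQS : ∀ (y : ℓ²) (k : ℕ), (adjoint (T*T) y) (k+1) = y (k+3) := fun y k => by
    rw [hQeq, ContinuousLinearMap.mul_apply, hTsS]
    have : (adjoint T y) (k+2) = (adjoint T y) ((k+1) + 1) := rfl
    rw [this, hTsS]
  -- the diagonal operators
  set D : ℓ² →L[ℂ] ℓ² := Dg (((α^2 - 1 : ℝ)) : ℂ) with hDdef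
  set B : ℓ² →L[ℂ] ℓ² := Dg (((α - 1 : ℝ)) : ℂ) with hBdef
  have hQP : adjoint (T * T) * (T * T) = D := by
    ext x k
    rw [ContinuousLinearMap.mul_apply]
    match k with
    | 0 => rw [hQ0, hP2, hDdef, Dg_apply_zero]; push_cast; ring
    | (k+1) => rw [hQS, hP3, hDdef, Dg_apply_succ]
  have hQDP : adjoint (T * T) * (D * (T * T)) = D := by
    ext x k
    rw [ContinuousLinearMap.mul_apply, ContinuousLinearMap.mul_apply]
    match k with
    | 0 =>
      rw [hQ0, hDdef]
      have : (Dg (((α^2 - 1 : ℝ)) : ℂ) ((T*T) x)) 2 = ((T*T) x) 2 := Dg_apply_succ _ _ 1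
      rw [this, hP2, Dg_apply_zero]
      push_cast; ring
    | (k+1) =>
      rw [hQS, hDdef]
      have : (Dg (((α^2 - 1 : ℝ)) : ℂ) ((T*T) x)) (k+3) = ((T*T) x) (k+3) := Dg_apply_succ _ _ (k+2)
      rw [this, hP3, Dg_apply_succ]
  have hInd : ∀ n : ℕ, adjoint (T * T) ^ (n+1) * (T * T) ^ (n+1) = D := by
    intro n
    induction n with
    | zero => rw [pow_one, pow_one]; exact hQP
    | succ n ih =>
      rw [pow_succ' (adjoint (T*T)) (n+1), pow_succ (T*T) (n+1), mul_assoc,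
        ← mul_assoc (adjoint (T*T) ^ (n+1)), ih]
      exact hQDP
  have hAD : A = D := by
    refine ContinuousLinearMap.ext fun x => ?_
    refine tendsto_nhds_unique (hA x) ?_
    refine tendsto_const_nhds.congr' ?_
    filter_upwards [eventually_ge_atTop 1] with k hk
    obtain ⟨m, rfl⟩ := Nat.exists_eq_add_of_le hk
    rw [add_comm 1 m, hInd m]
  -- B is the positive square root
  have hBB : B * B = D := by
    rw [hBdef, hDdef, Dg_mul_Dg]
    congr 1
    push_cast; ring
  have hBpos : B.IsPositive := Dg_isPositive (α - 1) (by linarith)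
  have h0A : 0 ≤ Asq := (ContinuousLinearMap.nonneg_iff_isPositive _).mpr hAsqpos
  have h0B : 0 ≤ B := (ContinuousLinearMap.nonneg_iff_isPositive _).mpr hBpos
  have hsqB : Asq = B := by
    exact sqrt_uniq_aux (hAsq.trans hAD) hBB h0A h0B
  constructor
  · intro x
    constructor
    · rw [hsqB, hBdef, Dg_apply_zero]; push_cast; ring
    · intro k hk
      match k, hk with
      | (m+1), _ => rw [hsqB, hBdef, Dg_apply_succ]
  · -- Astar = 0
    have hQn : ∀ (n : ℕ) (y : ℓ²),
        (((adjoint (T*T))^(n+1)) y) 0 = (α : ℂ) * y (2*(n+1)) ∧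
        ∀ k, (((adjoint (T*T))^(n+1)) y) (k+1) = y (k + 2*(n+1) + 1) := by
      intro n
      induction n with
      | zero =>
        intro y
        rw [zero_add, pow_one]
        exact ⟨by rw [hQ0], fun k => by rw [hQS]⟩
      | succ n ih =>
        intro y
        have hp : ((adjoint (T*T))^(n+2)) y = adjoint (T*T) (((adjoint (T*T))^(n+1)) y) := by
          rw [pow_succ' (adjoint (T*T)) (n+1), ContinuousLinearMap.mul_apply]
        constructor
        · rw [hp, hQ0]
          have h2 : (((adjoint (T*T))^(n+1)) y) 2 = y (1 + 2*(n+1) + 1) := (ih y).2 1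
          rw [h2]
          exact congrArg _ (congrArg _ (by omega))
        · intro k
          rw [hp, hQS]
          have h2 : (((adjoint (T*T))^(n+1)) y) (k+3) = y ((k+2) + 2*(n+1) + 1) := (ih y).2 (k+2)
          rw [h2]
          exact congrArg _ (by omega)
    have hQnorm : ∀ (n : ℕ) (y : ℓ²),
        ‖((adjoint (T*T))^(n+1)) y‖^2 ≤ ∑' k, ‖y (k + 2*(n+1))‖^2 := by
      intro n y
      rw [lp2_norm_sq]
      refine Summable.tsum_le_tsum (fun k => ?_) (lp2_summable _)
        ((lp2_summable y).comp_injective (add_left_injective (2*(n+1))))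
      match k with
      | 0 =>
        rw [(hQn n y).1, zero_add]
        have : ‖(α : ℂ) * y (2*(n+1))‖ = α * ‖y (2*(n+1))‖ := by
          rw [norm_mul, Complex.norm_real, Real.norm_of_nonneg hα.le]
        rw [this]
        have hc := norm_nonneg (y (2*(n+1)))
        nlinarith [mul_nonneg (sub_nonneg.mpr hα2) (mul_nonneg hc hc)]
      | (k+1) =>
        rw [(hQn n y).2 k]
        have : k + 1 + 2*(n+1) = k + 2*(n+1) + 1 := by omega
        rw [this]
    have hPnorm : ∀ z : ℓ², ‖(T*T) z‖ ≤ ‖z‖ := by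
      intro z
      have h1 : (inner ℂ ((T*T) z) ((T*T) z) : ℂ) = inner ℂ z (D z) := by
        have h2 : D z = adjoint (T*T) ((T*T) z) := by
          rw [← ContinuousLinearMap.mul_apply, hQP]
        rw [h2, adjoint_inner_right]
      have h3 : ‖(T*T) z‖^2 = ‖z‖^2 + (α^2 - 1) * ‖z 0‖^2 := by
        have := congrArg (RCLike.re (K := ℂ)) h1
        rwa [@inner_self_eq_norm_sq ℂ, hDdef, re_inner_Dg] at this
      have h4 : ‖z 0‖ ≤ ‖z‖ := lp.norm_apply_le_norm (by norm_num) z 0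
      have h6 : ‖(T*T) z‖^2 ≤ ‖z‖^2 := by
        nlinarith [mul_nonneg (sub_nonneg.mpr hα2) (sq_nonneg (‖z 0‖))]
      nlinarith [norm_nonneg ((T*T) z), norm_nonneg z]
    have hPn : ∀ (n : ℕ) (z : ℓ²), ‖((T*T)^n) z‖ ≤ ‖z‖ := by
      intro n
      induction n with
      | zero => intro z; rw [pow_zero, ContinuousLinearMap.one_apply]
      | succ n ih =>
        intro z
        have hp : ((T*T)^(n+1)) z = (T*T) (((T*T)^n) z) := by
          rw [pow_succ' (T*T) n, ContinuousLinearMap.mul_apply]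
        rw [hp]
        exact (hPnorm _).trans (ih z)
    have hmain : ∀ x : ℓ²,
        Tendsto (fun k : ℕ => ((T * T) ^ k * (adjoint (T * T)) ^ k) x) atTop (nhds 0) := by
      intro x
      rw [tendsto_zero_iff_norm_tendsto_zero]
      have h2k : Tendsto (fun k : ℕ => 2*k) atTop atTop := by
        refine tendsto_atTop_mono (f := id) (fun n => ?_) tendsto_id
        show n ≤ 2*n
        omega
      have htail : Tendsto (fun k : ℕ => ∑' i, ‖x (i + 2*k)‖^2) atTop (nhds 0) :=
        (tendsto_sum_nat_add (fun i => ‖x i‖^2)).comp h2k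
      have hsq : Tendsto (fun k : ℕ => ‖((T * T) ^ k * (adjoint (T * T)) ^ k) x‖^2)
          atTop (nhds 0) := by
        refine squeeze_zero' ?_ ?_ htail
        · filter_upwards with k; positivity
        · filter_upwards [eventually_ge_atTop 1] with k hk
          obtain ⟨m, rfl⟩ := Nat.exists_eq_add_of_le hk
          rw [add_comm 1 m, ContinuousLinearMap.mul_apply]
          calc ‖((T*T)^(m+1)) (((adjoint (T*T))^(m+1)) x)‖^2
              ≤ ‖((adjoint (T*T))^(m+1)) x‖^2 := by
                have := hPn (m+1) (((adjoint (T*T))^(m+1)) x)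
                nlinarith [norm_nonneg (((T*T)^(m+1)) (((adjoint (T*T))^(m+1)) x)),
                  norm_nonneg (((adjoint (T*T))^(m+1)) x)]
            _ ≤ ∑' i, ‖x (i + 2*(m+1))‖^2 := hQnorm m x
      have h5 := (Real.continuous_sqrt.tendsto 0).comp hsq
      rw [Real.sqrt_zero] at h5
      refine h5.congr fun k => ?_
      exact Real.sqrt_sq (norm_nonneg _)
    refine ContinuousLinearMap.ext fun x => ?_
    rw [ContinuousLinearMap.zero_apply]
    exact tendsto_nhds_unique (hAstar x) (hmain x)
end

section
/- Let $(S_1,\dots,S_{n-1},P)$ be a commuting tuple of bounded operators on $\mathcal{H}$ with $A_1,\dots,A_{n-1}$ on $\mathcal{D}_P$ satisfying $D_P S_i = A_i D_P + A_{n-i}^* D_P P$ for each $i$. Let $W_1 : \mathcal{H} \to \ell^2(\mathbb{N},\mathcal{D}_P)$ be defined by $W_1 h = (D_P P^k h)_{k\ge 0}$. Then for each $i$, $(I\otimes A_i + M_z^*\otimes A_{n-i}^*) W_1 = W_1 S_i$, where $(I\otimes A_i + M_z^*\otimes A_{n-i}^*)$ sends $(a_0,a_1,\dots)$ to $(A_i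 a_0 + A_{n-i}^* a_1,\ A_i a_1 + A_{n-i}^* a_2,\ \dots)$. -/
open ContinuousLinearMap

theorem ContinuousLinearMap.apply_pow_apply_of_fundamental_eq {R E : Type*} [Semiring R]
    [TopologicalSpace E] [AddCommMonoid E] [ContinuousAdd E] [Module R E] {D S A B P : E →L[R] E}
    (hSP : Commute S P) (hfund : D * S = A * D + B * D * P) (k : ℕ) (h : E) :
    D ((P ^ k) (S h)) = A (D ((P ^ k) h)) + B (D ((P ^ (k + 1)) h)) := by
  have hop : D * P ^ k * S = A * (D * P ^ k) + B * (D * P ^ (k + 1)) := by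
    rw [mul_assoc, ← (hSP.pow_right k).eq, ← mul_assoc, hfund, pow_succ', add_mul]
    simp only [mul_assoc]
  exact congr($hop h)

theorem stmt15_general {H : Type*} [NormedAddCommGroup H] [InnerProductSpace ℂ H] [CompleteSpace H]
    (n : ℕ)
    (S : ℕ → (H →L[ℂ] H)) (P : H →L[ℂ] H)
    (hcommP : ∀ i, 1 ≤ i → i ≤ n - 1 → S i * P = P * S i)
    (DP : H →L[ℂ] H)
    (A : ℕ → (H →L[ℂ] H))
    (hA : ∀ i, 1 ≤ i → i ≤ n - 1 →
      DP * S i = A i * DP + adjoint (A (n - i)) * DP * P)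
    (W₁ : H →L[ℂ] lp (fun _ : ℕ => H) 2)
    (hW₁ : ∀ (h : H) (k : ℕ), (W₁ h) k = DP ((P ^ k) h)) :
    ∀ i, 1 ≤ i → i ≤ n - 1 → ∀ (h : H) (k : ℕ),
      A i ((W₁ h) k) + adjoint (A (n - i)) ((W₁ h) (k + 1)) = (W₁ (S i h)) k := by
  intro i hi₁ hi₂ h k
  rw [hW₁, hW₁, hW₁]
  exact (apply_pow_apply_of_fundamental_eq (hcommP i hi₁ hi₂) (hA i hi₁ hi₂) k h).symm

/-- Let `(S₁,…,S_{n-1},P)` be a commuting tuple on a Hilbert space `H` with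
`P` a contraction, and let `A₁,…,A_{n-1}` (operators on `𝒟_P`) satisfy the fundamental
equations `D_P Sᵢ = Aᵢ D_P + A_{n-i}* D_P P`.  Let `W₁ : H → ℓ²(ℕ, 𝒟_P) ≅ H²(𝔻)⊗𝒟_P` be
`W₁ h = (D_P Pᵏ h)ₖ`.  Then `(I⊗Aᵢ + M_z*⊗A_{n-i}*) W₁ = W₁ Sᵢ`, i.e. coordinatewise
`Aᵢ((W₁h)ₖ) + A_{n-i}*((W₁h)ₖ₊₁) = (W₁(Sᵢh))ₖ`. -/
theorem stmt15 {H : Type*} [NormedAddCommGroup H] [InnerProductSpace ℂ H] [CompleteSpace H]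
    (n : ℕ) (hn : 2 ≤ n)
    (S : ℕ → (H →L[ℂ] H)) (P : H →L[ℂ] H) (hP : ‖P‖ ≤ 1)
    (hcomm : ∀ i j, 1 ≤ i → i ≤ n - 1 → 1 ≤ j → j ≤ n - 1 → S i * S j = S j * S i)
    (hcommP : ∀ i, 1 ≤ i → i ≤ n - 1 → S i * P = P * S i)
    (DP : H →L[ℂ] H) (hDPpos : DP.IsPositive) (hDPsq : DP * DP = 1 - adjoint P * P)
    (A : ℕ → (H →L[ℂ] H))
    (hA : ∀ i, 1 ≤ i → i ≤ n - 1 →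
      DP * S i = A i * DP + adjoint (A (n - i)) * DP * P)
    (W₁ : H →L[ℂ] lp (fun _ : ℕ => H) 2)
    (hW₁ : ∀ (h : H) (k : ℕ), (W₁ h) k = DP ((P ^ k) h)) :
    ∀ i, 1 ≤ i → i ≤ n - 1 → ∀ (h : H) (k : ℕ),
      A i ((W₁ h) k) + adjoint (A (n - i)) ((W₁ h) (k + 1)) = (W₁ (S i h)) k :=
  stmt15_general n S P hcommP DP A hA W₁ hW₁
end

section
/- Let $B, C$ be bounded operators on a Hilbert space $\mathcal{E}_*$ and consider the multiplication operators $M_{\Phi}$ and $M_{\Psi}$ on $H^2(\mathcal{E}_*)$ with symbols $\Phi(z) = B + zC^*$ and $\Psi(z) = C + zB^*$. Then $M_{\Psi} = M_{\Phi}^* M_z$ and $M_{\Phi} = M_{\Psi}^* M_z$. Conversely, if $\Phi, \Psi \in H^\infty(\mathcal{B}(\mathcal{E}_*))$ satisfy $M_{\Psi} = M_{\Phi}^*M_z$ and $M_{\Phi} = M_{\Psi}^*M_z$, then there exist $B, C \in \mathcal{B}(\mathcal{E}_*)$ with $\Phi(z) = B + zC^*$ and $\Psi(z) = C + zB^*$.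 -/
open ContinuousLinearMap
open scoped ENNReal


local notation "⟪" x ", " y "⟫" => @inner ℂ _ _ x y

section Aux
variable {Es : Type*} [NormedAddCommGroup Es] [InnerProductSpace ℂ Es] [CompleteSpace Es]

lemma sq_summable (f : lp (fun _ : ℕ => Es) 2) : Summable fun n => ‖f n‖ ^ 2 := by
  have h := (lp.memℓp f).summable (by norm_num)
  have : ((2 : ℝ≥0∞).toReal) = (2 : ℝ) := by norm_num
  rw [this] at h
  simpa [Real.rpow_two] using h

lemma sq_summable_map (T : Es →L[ℂ] Es) {a : ℕ → Es} (ha : Summable fun n => ‖a n‖ ^ 2) :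
    Summable fun n => ‖T (a n)‖ ^ 2 := by
  refine Summable.of_nonneg_of_le (fun n => sq_nonneg _) (fun n => ?_) (ha.mul_left (‖T‖ ^ 2))
  have h1 := T.le_opNorm (a n)
  have h2 := norm_nonneg (T (a n))
  nlinarith [norm_nonneg (a n), T.opNorm_nonneg]

lemma inner_summable {a b : ℕ → Es} (ha : Summable fun n => ‖a n‖ ^ 2)
    (hb : Summable fun n => ‖b n‖ ^ 2) : Summable fun n => ⟪a n, b n⟫ := by
  refine Summable.of_norm_bounded (g := fun n => (‖a n‖ ^ 2 + ‖b n‖ ^ 2) / 2)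
    ((ha.add hb).div_const 2) fun n => ?_
  have h1 := norm_inner_le_norm (𝕜 := ℂ) (a n) (b n)
  nlinarith [sq_nonneg (‖a n‖ - ‖b n‖)]

lemma sq_summable_shift (f : lp (fun _ : ℕ => Es) 2) : Summable fun n => ‖f (n + 1)‖ ^ 2 :=
  (summable_nat_add_iff 1).2 (sq_summable f)

lemma inner_single_left' (m : ℕ) (x : Es) (f : lp (fun _ : ℕ => Es) 2) :
    ⟪(lp.single 2 m x : lp (fun _ : ℕ => Es) 2), f⟫ = ⟪x, f m⟫ := by
  rw [lp.inner_eq_tsum, tsum_eq_single m]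
  · rw [lp.single_apply_self (E := fun _ : ℕ => Es)]
  · intro n hn
    rw [lp.single_apply_ne (E := fun _ : ℕ => Es) 2 m x hn, inner_zero_left]

lemma inner_single_right' (m : ℕ) (y : Es) (f : lp (fun _ : ℕ => Es) 2) :
    ⟪f, (lp.single 2 m y : lp (fun _ : ℕ => Es) 2)⟫ = ⟪f m, y⟫ := by
  rw [lp.inner_eq_tsum, tsum_eq_single m]
  · rw [lp.single_apply_self (E := fun _ : ℕ => Es)]
  · intro n hn
    rw [lp.single_apply_ne (E := fun _ : ℕ => Es) 2 m y hn, inner_zero_right]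

end Aux

section Main
variable {Es : Type*} [NormedAddCommGroup Es] [InnerProductSpace ℂ Es] [CompleteSpace Es]

lemma fwd_aux (S : lp (fun _ : ℕ => Es) 2 →L[ℂ] lp (fun _ : ℕ => Es) 2)
    (hS : ∀ f : lp (fun _ : ℕ => Es) 2, (S f) 0 = 0 ∧ ∀ k : ℕ, (S f) (k + 1) = f k)
    (B C : Es →L[ℂ] Es)
    (MΦ MΨ : lp (fun _ : ℕ => Es) 2 →L[ℂ] lp (fun _ : ℕ => Es) 2)
    (hΦ : ∀ f : lp (fun _ : ℕ => Es) 2,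
      (MΦ f) 0 = B (f 0) ∧ ∀ k : ℕ, (MΦ f) (k + 1) = B (f (k + 1)) + adjoint C (f k))
    (hΨ : ∀ f : lp (fun _ : ℕ => Es) 2,
      (MΨ f) 0 = C (f 0) ∧ ∀ k : ℕ, (MΨ f) (k + 1) = C (f (k + 1)) + adjoint B (f k)) :
    MΨ = adjoint MΦ ∘L S := by
  refine ContinuousLinearMap.ext fun f => ?_
  apply ext_inner_left ℂ
  intro g
  rw [ContinuousLinearMap.comp_apply, adjoint_inner_right]
  set q : ℕ → ℂ := fun n => ⟪g n, C (f n)⟫ with hq_def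
  set p : ℕ → ℂ := fun n => ⟪g (n + 1), adjoint B (f n)⟫ with hp_def
  have hq : Summable q := inner_summable (sq_summable g) (sq_summable_map C (sq_summable f))
  have hp : Summable p :=
    inner_summable (sq_summable_shift g) (sq_summable_map (adjoint B) (sq_summable f))
  have hq' : Summable fun n => q (n + 1) := (summable_nat_add_iff 1).2 hq
  have hL : ⟪g, MΨ f⟫ = q 0 + (∑' n, q (n + 1) + ∑' n, p n) := by
    rw [lp.inner_eq_tsum, Summable.tsum_eq_zero_add (lp.summable_inner (𝕜 := ℂ) g (MΨ f))]
    rw [(hΨ f).1, ← Summable.tsum_add hq' hp]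
    congr 1
    refine tsum_congr fun n => ?_
    rw [(hΨ f).2 n, inner_add_right]
  have hRc : ⟪MΦ g, S f⟫ = ∑' n, p n + ∑' n, q n := by
    rw [lp.inner_eq_tsum, Summable.tsum_eq_zero_add (lp.summable_inner (𝕜 := ℂ) (MΦ g) (S f)), (hS f).1,
      inner_zero_right, zero_add, ← Summable.tsum_add hp hq]
    refine tsum_congr fun n => ?_
    rw [(hS f).2 n, (hΦ g).2 n, inner_add_left, hp_def, hq_def]
    simp only []
    rw [adjoint_inner_right, adjoint_inner_left]
  rw [hL, hRc, Summable.tsum_eq_zero_add hq]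
  ring

lemma coord_single (MΦ : lp (fun _ : ℕ => Es) 2 →L[ℂ] lp (fun _ : ℕ => Es) 2)
    (Φc : ℕ → (Es →L[ℂ] Es))
    (hM : ∀ (f : lp (fun _ : ℕ => Es) 2) (k : ℕ),
      (MΦ f) k = ∑ j ∈ Finset.range (k + 1), Φc j (f (k - j)))
    (n m : ℕ) (y : Es) :
    (MΦ (lp.single 2 n y)) m = if n ≤ m then Φc (m - n) y else 0 := by
  rw [hM]
  split_ifs with h
  · rw [Finset.sum_eq_single (m - n)]
    · rw [Nat.sub_sub_self h, lp.single_apply_self (E := fun _ : ℕ => Es)]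
    · intro j hj hne
      rw [lp.single_apply_ne (E := fun _ : ℕ => Es) 2 n y, map_zero]
      simp only [Finset.mem_range] at hj
      omega
    · intro h'
      exact absurd (Finset.mem_range.2 (by omega)) h'
  · apply Finset.sum_eq_zero
    intro j hj
    rw [lp.single_apply_ne (E := fun _ : ℕ => Es) 2 n y, map_zero]
    simp only [Finset.mem_range] at hj
    omega

lemma shift_single (S : lp (fun _ : ℕ => Es) 2 →L[ℂ] lp (fun _ : ℕ => Es) 2)
    (hS : ∀ f : lp (fun _ : ℕ => Es) 2, (S f) 0 = 0 ∧ ∀ k : ℕ, (S f) (k + 1) = f k)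
    (n : ℕ) (y : Es) :
    S (lp.single 2 n y) = lp.single 2 (n + 1) y := by
  apply lp.ext
  funext k
  match k with
  | 0 =>
    rw [(hS _).1, lp.single_apply_ne (E := fun _ : ℕ => Es) 2 (n + 1) y (by omega)]
  | k + 1 =>
    rw [(hS _).2 k]
    rcases eq_or_ne k n with rfl | hk
    · rw [lp.single_apply_self (E := fun _ : ℕ => Es),
        lp.single_apply_self (E := fun _ : ℕ => Es)]
    · rw [lp.single_apply_ne (E := fun _ : ℕ => Es) 2 n y hk,
        lp.single_apply_ne (E := fun _ : ℕ => Es) 2 (n + 1) y (by omega)]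

lemma conv_aux (S : lp (fun _ : ℕ => Es) 2 →L[ℂ] lp (fun _ : ℕ => Es) 2)
    (hS : ∀ f : lp (fun _ : ℕ => Es) 2, (S f) 0 = 0 ∧ ∀ k : ℕ, (S f) (k + 1) = f k)
    (MΦ MΨ : lp (fun _ : ℕ => Es) 2 →L[ℂ] lp (fun _ : ℕ => Es) 2)
    (Φc Ψc : ℕ → (Es →L[ℂ] Es))
    (hΦ : ∀ (f : lp (fun _ : ℕ => Es) 2) (k : ℕ),
      (MΦ f) k = ∑ j ∈ Finset.range (k + 1), Φc j (f (k - j)))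
    (hΨ : ∀ (f : lp (fun _ : ℕ => Es) 2) (k : ℕ),
      (MΨ f) k = ∑ j ∈ Finset.range (k + 1), Ψc j (f (k - j)))
    (hA : MΨ = adjoint MΦ ∘L S) :
    Φc 1 = adjoint (Ψc 0) ∧ Ψc 1 = adjoint (Φc 0) ∧ ∀ d : ℕ, 2 ≤ d → Ψc d = 0 := by
  have key : ∀ (n m : ℕ), n ≤ m → ∀ (x y : Es),
      ⟪x, Ψc (m - n) y⟫ = if m ≤ n + 1 then ⟪Φc (n + 1 - m) x, y⟫ else 0 := by
    intro n m hnm x y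
    have h1 : ⟪(lp.single 2 m x : lp (fun _ : ℕ => Es) 2), MΨ (lp.single 2 n y)⟫
        = ⟪x, Ψc (m - n) y⟫ := by
      rw [inner_single_left', coord_single MΨ Ψc hΨ, if_pos hnm]
    have h2 : ⟪(lp.single 2 m x : lp (fun _ : ℕ => Es) 2), MΨ (lp.single 2 n y)⟫
        = if m ≤ n + 1 then ⟪Φc (n + 1 - m) x, y⟫ else 0 := by
      rw [hA, ContinuousLinearMap.comp_apply, adjoint_inner_right,
        shift_single S hS n y, inner_single_right',
        coord_single MΦ Φc hΦ]
      split_ifs with h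
      · rfl
      · rw [inner_zero_left]
    rw [← h1, h2]
  have eq1 : Φc 1 = adjoint (Ψc 0) := by
    have h0 : Ψc 0 = adjoint (Φc 1) := by
      refine ContinuousLinearMap.ext fun y => ?_
      apply ext_inner_left ℂ
      intro x
      have := key 0 0 le_rfl x y
      simpa [adjoint_inner_right] using this
    rw [h0, adjoint_adjoint]
  refine ⟨eq1, ?_, ?_⟩
  · refine ContinuousLinearMap.ext fun y => ?_
    apply ext_inner_left ℂ
    intro x
    have := key 0 1 (by omega) x y
    simpa [adjoint_inner_right] using this
  · intro d hd
    refine ContinuousLinearMap.ext fun y => ?_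
    apply ext_inner_left ℂ
    intro x
    have := key 0 d (by omega) x y
    rw [if_neg (by omega)] at this
    simpa using this

end Main


/-- On `H²(ℰ*) ≅ ℓ²(ℕ, ℰ*)` with shift `M_z`, consider for bounded
operators `B, C` on `ℰ*` the multiplication operators `M_Φ, M_Ψ` with symbols
`Φ(z) = B + zC*` and `Ψ(z) = C + zB*`.  Then `M_Ψ = M_Φ* M_z` and `M_Φ = M_Ψ* M_z`.
Conversely, if `Φ, Ψ ∈ H^∞(𝓑(ℰ*))` (encoded by their Taylor-coefficient/Toeplitz action)
satisfy `M_Ψ = M_Φ* M_z` and `M_Φ = M_Ψ* M_z`, then there exist `B, C` with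
`Φ(z) = B + zC*` and `Ψ(z) = C + zB*` (i.e. `Φ₀ = B`, `Φ₁ = C*`, `Φₖ = 0` for `k ≥ 2`,
and similarly for `Ψ`). -/
theorem stmt19 {Es : Type*}
    [NormedAddCommGroup Es] [InnerProductSpace ℂ Es] [CompleteSpace Es]
    (S : lp (fun _ : ℕ => Es) 2 →L[ℂ] lp (fun _ : ℕ => Es) 2)
    (hS : ∀ f : lp (fun _ : ℕ => Es) 2, (S f) 0 = 0 ∧ ∀ k : ℕ, (S f) (k + 1) = f k) :
    -- forward direction
    (∀ (B C : Es →L[ℂ] Es)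
        (MΦ MΨ : lp (fun _ : ℕ => Es) 2 →L[ℂ] lp (fun _ : ℕ => Es) 2),
      (∀ f : lp (fun _ : ℕ => Es) 2,
        (MΦ f) 0 = B (f 0) ∧ ∀ k : ℕ, (MΦ f) (k + 1) = B (f (k + 1)) + adjoint C (f k)) →
      (∀ f : lp (fun _ : ℕ => Es) 2,
        (MΨ f) 0 = C (f 0) ∧ ∀ k : ℕ, (MΨ f) (k + 1) = C (f (k + 1)) + adjoint B (f k)) →
      MΨ = adjoint MΦ ∘L S ∧ MΦ = adjoint MΨ ∘L S) ∧
    -- converse direction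
    (∀ (MΦ MΨ : lp (fun _ : ℕ => Es) 2 →L[ℂ] lp (fun _ : ℕ => Es) 2)
        (Φc Ψc : ℕ → (Es →L[ℂ] Es)),
      (∀ (f : lp (fun _ : ℕ => Es) 2) (k : ℕ),
        (MΦ f) k = ∑ j ∈ Finset.range (k + 1), Φc j (f (k - j))) →
      (∀ (f : lp (fun _ : ℕ => Es) 2) (k : ℕ),
        (MΨ f) k = ∑ j ∈ Finset.range (k + 1), Ψc j (f (k - j))) →
      MΨ = adjoint MΦ ∘L S → MΦ = adjoint MΨ ∘L S →
      ∃ B C : Es →L[ℂ] Es,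
        Φc 0 = B ∧ Φc 1 = adjoint C ∧ (∀ k : ℕ, 2 ≤ k → Φc k = 0) ∧
        Ψc 0 = C ∧ Ψc 1 = adjoint B ∧ (∀ k : ℕ, 2 ≤ k → Ψc k = 0)) := by
  constructor
  · intro B C MΦ MΨ hΦ hΨ
    exact ⟨fwd_aux S hS B C MΦ MΨ hΦ hΨ, fwd_aux S hS C B MΨ MΦ hΨ hΦ⟩
  · intro MΦ MΨ Φc Ψc hΦ hΨ hA hB
    obtain ⟨h1, h2, h3⟩ := conv_aux S hS MΦ MΨ Φc Ψc hΦ hΨ hA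
    obtain ⟨h1', h2', h3'⟩ := conv_aux S hS MΨ MΦ Ψc Φc hΨ hΦ hB
    exact ⟨Φc 0, Ψc 0, rfl, h1, h3', rfl, h2, h3⟩
end
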